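/- For every x ≠ 0, (X₀''(x))² + (1 + 9/(4x²)) (X₀'(x))² − 2 ((X₀(x) + X₀''(x))/x) X₀'(x) = −5; that is, the first integral G^{X₀} of the defining equation of X₀ is identically equal to −5. -/

import Mathlib

open Real Set Filter

namespace Stmt2Aux

/-- term of the `n`-th derivative series -/
noncomputable def tm (a : ℕ → ℝ) (n k : ℕ) (x : ℝ) : ℝ :=
  a (k + 1) * ((2 * k + 2).descFactorial n : ℝ) * x ^ (2 * k + 2 - n)

/-- the `n`-th derivative function -/
noncomputable def W (a : ℕ → ℝ) (n : ℕ) (x : ℝ) : ℝ := ∑' k : ℕ, tm a n k x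

variable {a : ℕ → ℝ}

lemma habs (ha1 : a 1 = 1)
    (harec : ∀ k : ℕ, 1 ≤ k →
      2 * ((k : ℝ) + 1) * (4 * (k : ℝ) ^ 2 + 5 / 4) * a (k + 1) + (2 * (k : ℝ) - 1) * a k = 0) :
    ∀ k : ℕ, |a (k + 1)| ≤ 1 / (k.factorial : ℝ) ^ 2 := by
  intro k
  induction k with
  | zero => simp [ha1]
  | succ k ih =>
    have h := harec (k + 1) (by omega)
    push_cast at h
    have hD : (0:ℝ) < 2 * ((k:ℝ) + 1 + 1) * (4 * ((k:ℝ) + 1) ^ 2 + 5 / 4) := by positivity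
    have key : a (k + 1 + 1) = (-(2 * ((k:ℝ) + 1) - 1) * a (k + 1)) /
        (2 * ((k:ℝ) + 1 + 1) * (4 * ((k:ℝ) + 1) ^ 2 + 5 / 4)) := by
      field_simp
      linarith [h]
    have hfac : (((k+1).factorial : ℝ)) = ((k:ℝ) + 1) * (k.factorial : ℝ) := by
      push_cast [Nat.factorial_succ]; ring
    have hkf : (0:ℝ) < (k.factorial : ℝ) := by exact_mod_cast k.factorial_pos
    have habs1 : |(-(2 * ((k:ℝ) + 1) - 1) * a (k + 1))| = (2 * (k:ℝ) + 1) * |a (k+1)| := by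
      rw [abs_mul]
      congr 1
      rw [abs_of_nonpos (by nlinarith [Nat.cast_nonneg (α := ℝ) k])]
      ring
    rw [key, abs_div, habs1, abs_of_pos hD, hfac, div_le_div_iff₀ hD (by positivity)]
    have hia : |a (k+1)| * (k.factorial : ℝ)^2 ≤ 1 := by
      have h2 := mul_le_mul_of_nonneg_right ih (le_of_lt (show (0:ℝ) < (k.factorial : ℝ)^2 by positivity))
      calc |a (k+1)| * (k.factorial : ℝ)^2 ≤ (1 / (k.factorial : ℝ)^2) * (k.factorial : ℝ)^2 := h2
        _ = 1 := by field_simp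
    nlinarith [abs_nonneg (a (k+1)), Nat.cast_nonneg (α := ℝ) k, sq_nonneg ((k:ℝ)+1),
      mul_le_mul_of_nonneg_left hia (show (0:ℝ) ≤ (2*(k:ℝ)+1) * ((k:ℝ)+1)^2 by positivity)]

lemma summ_aux (n : ℕ) (R : ℝ) (hR : 0 ≤ R) :
    Summable (fun k : ℕ => (2 * (k:ℝ) + 2) ^ n * R ^ (2 * k) / (k.factorial : ℝ) ^ 2) := by
  apply summable_of_ratio_norm_eventually_le (r := 1/2) (by norm_num)
  filter_upwards [Filter.eventually_ge_atTop (⌈(2:ℝ)^(n+1) * (R^2+1)⌉₊)] with k hk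
  have hkR : (2:ℝ)^(n+1) * (R^2+1) ≤ (k:ℝ) := by
    exact_mod_cast (Nat.ceil_le.mp hk)
  have hkf : (0:ℝ) < (k.factorial : ℝ) := by exact_mod_cast k.factorial_pos
  have hfac : (((k+1).factorial : ℝ))^2 = ((k:ℝ) + 1)^2 * (k.factorial : ℝ)^2 := by
    push_cast [Nat.factorial_succ]; ring
  have e2 : (2:ℝ) * (↑(k+1)) + 2 = 2 * (k:ℝ) + 4 := by push_cast; ring
  have epow : R ^ (2 * (k+1)) = R ^ (2*k) * R^2 := by
    rw [show 2*(k+1) = 2*k + 2 by ring, pow_add]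
  rw [Real.norm_eq_abs, Real.norm_eq_abs, abs_of_nonneg (by positivity),
    abs_of_nonneg (by positivity), hfac, e2, epow]
  rw [div_le_iff₀ (by positivity)]
  have erhs : 1 / 2 * ((2 * (k:ℝ) + 2) ^ n * R ^ (2 * k) / (k.factorial:ℝ) ^ 2) *
      (((k:ℝ) + 1) ^ 2 * (k.factorial:ℝ) ^ 2)
      = 1 / 2 * ((2 * (k:ℝ) + 2) ^ n * R ^ (2 * k)) * ((k:ℝ) + 1) ^ 2 := by
    field_simp
  rw [erhs]
  have e1 : (2 * (k:ℝ) + 4) ^ n ≤ 2^n * (2 * (k:ℝ) + 2)^n := by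
    rw [← mul_pow]
    apply pow_le_pow_left₀ (by positivity)
    linarith [Nat.cast_nonneg (α := ℝ) k]
  have hR2 : 2^(n+1) * R^2 ≤ ((k:ℝ)+1)^2 := by
    have h1 : (k:ℝ) ≤ ((k:ℝ)+1)^2 := by nlinarith [Nat.cast_nonneg (α := ℝ) k]
    have h2 : (0:ℝ) < 2^(n+1) := by positivity
    nlinarith [h2]
  have hmono1 := mul_le_mul_of_nonneg_right e1
    (show (0:ℝ) ≤ R^(2*k) * R^2 by positivity)
  have hmono2 := mul_le_mul_of_nonneg_right hR2
    (show (0:ℝ) ≤ (2 * (k:ℝ) + 2)^n * R^(2*k) by positivity)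
  have h2n : (2:ℝ)^(n+1) = 2 * 2^n := by ring
  rw [h2n] at hmono2
  nlinarith [hmono1, hmono2]

lemma tm_norm_le (ha : ∀ k : ℕ, |a (k + 1)| ≤ 1 / (k.factorial : ℝ) ^ 2)
    (n k : ℕ) {R y : ℝ} (hR : 1 ≤ R) (hy : |y| ≤ R) :
    ‖tm a n k y‖ ≤ R ^ 2 * ((2 * (k:ℝ) + 2) ^ n * R ^ (2 * k) / (k.factorial : ℝ) ^ 2) := by
  have hR0 : (0:ℝ) ≤ R := le_trans zero_le_one hR
  have hkf : (0:ℝ) < (k.factorial : ℝ) := by exact_mod_cast k.factorial_pos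
  have hdf : (((2 * k + 2).descFactorial n : ℕ) : ℝ) ≤ (2 * (k:ℝ) + 2) ^ n := by
    calc (((2 * k + 2).descFactorial n : ℕ) : ℝ) ≤ (((2 * k + 2)^n : ℕ) : ℝ) := by
          exact_mod_cast Nat.descFactorial_le_pow _ _
      _ = (2 * (k:ℝ) + 2) ^ n := by push_cast; ring
  have hyp : |y| ^ (2 * k + 2 - n) ≤ R ^ (2 * k + 2) := by
    calc |y| ^ (2 * k + 2 - n) ≤ R ^ (2 * k + 2 - n) :=
          pow_le_pow_left₀ (abs_nonneg y) hy _
      _ ≤ R ^ (2 * k + 2) := pow_le_pow_right₀ hR (Nat.sub_le _ _)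
  rw [tm, Real.norm_eq_abs, abs_mul, abs_mul, abs_pow]
  have hdfnn : (0:ℝ) ≤ (((2 * k + 2).descFactorial n : ℕ) : ℝ) := Nat.cast_nonneg _
  calc |a (k+1)| * |(((2 * k + 2).descFactorial n : ℕ) : ℝ)| * |y| ^ (2 * k + 2 - n)
      ≤ (1 / (k.factorial : ℝ)^2) * ((2 * (k:ℝ) + 2) ^ n) * R ^ (2 * k + 2) := by
        apply mul_le_mul
        · apply mul_le_mul (ha k) (by rwa [abs_of_nonneg hdfnn]) (abs_nonneg _) (by positivity)
        · exact hyp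
        · positivity
        · positivity
    _ = R ^ 2 * ((2 * (k:ℝ) + 2) ^ n * R ^ (2 * k) / (k.factorial : ℝ) ^ 2) := by
        rw [show 2*k+2 = 2 + 2*k by ring, pow_add]
        field_simp

lemma summable_tm (ha : ∀ k : ℕ, |a (k + 1)| ≤ 1 / (k.factorial : ℝ) ^ 2) (n : ℕ) (y : ℝ) :
    Summable (fun k => tm a n k y) := by
  set R : ℝ := |y| + 1 with hRdef
  have hR : 1 ≤ R := by rw [hRdef]; linarith [abs_nonneg y]
  have hy : |y| ≤ R := by rw [hRdef]; linarith
  exact Summable.of_norm_bounded ((summ_aux n R (by linarith)).mul_left (R^2))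
    (fun k => tm_norm_le ha n k hR hy)

lemma hSum (ha : ∀ k : ℕ, |a (k + 1)| ≤ 1 / (k.factorial : ℝ) ^ 2) (n : ℕ) (x : ℝ) :
    HasSum (fun k => tm a n k x) (W a n x) := (summable_tm ha n x).hasSum

lemma tm_hasDerivAt (n k : ℕ) (y : ℝ) :
    HasDerivAt (fun z => tm a n k z) (tm a (n+1) k y) y := by
  have h := (hasDerivAt_pow (2 * k + 2 - n) y).const_mul
    (a (k + 1) * ((2 * k + 2).descFactorial n : ℝ))
  have e : tm a (n+1) k y = a (k + 1) * ((2 * k + 2).descFactorial n : ℝ) *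
      (↑(2 * k + 2 - n) * y ^ (2 * k + 2 - n - 1)) := by
    rw [tm, Nat.descFactorial_succ, Nat.cast_mul, Nat.sub_sub]
    ring
  rw [e]
  exact h.congr_deriv (by ring)

lemma hW (ha : ∀ k : ℕ, |a (k + 1)| ≤ 1 / (k.factorial : ℝ) ^ 2) (n : ℕ) (x : ℝ) :
    HasDerivAt (W a n) (W a (n+1) x) x := by
  set R : ℝ := |x| + 1 with hRdef
  have hR : 1 ≤ R := by rw [hRdef]; linarith [abs_nonneg x]
  have hR0 : (0:ℝ) ≤ R := by linarith
  have hball : x ∈ Metric.ball (0:ℝ) R := by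
    simp only [Metric.mem_ball, dist_zero_right, Real.norm_eq_abs, hRdef]
    linarith
  exact hasDerivAt_tsum_of_isPreconnected
    ((summ_aux (n+1) R hR0).mul_left (R^2))
    Metric.isOpen_ball
    (convex_ball (0:ℝ) R).isPreconnected
    (fun k y _ => tm_hasDerivAt n k y)
    (fun k y hy => by
      apply tm_norm_le ha (n+1) k hR
      have := Metric.mem_ball.mp hy
      rw [dist_zero_right, Real.norm_eq_abs] at this
      linarith)
    hball
    (summable_tm ha n x)
    hball

section Vals

variable (ha1 : a 1 = 1)

lemma hW00 : W a 0 0 = 0 := by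
  have : ∀ k, tm a 0 k (0:ℝ) = 0 := by
    intro k; rw [tm, zero_pow (by omega)]; ring
  simp [W, this]

lemma hW10 : W a 1 0 = 0 := by
  have : ∀ k, tm a 1 k (0:ℝ) = 0 := by
    intro k; rw [tm, zero_pow (by omega)]; ring
  simp [W, this]

lemma hW30 : W a 3 0 = 0 := by
  have : ∀ k, tm a 3 k (0:ℝ) = 0 := by
    intro k
    match k with
    | 0 => simp [tm, Nat.descFactorial]
    | (k+1) => rw [tm, zero_pow (by omega)]; ring
  simp [W, this]

lemma hW20 (ha1 : a 1 = 1) : W a 2 0 = 2 := by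
  rw [W, tsum_eq_single 0 (fun k hk => by
    rw [tm, zero_pow (by omega)]; ring)]
  simp [tm, Nat.descFactorial, ha1]

end Vals

/-- coefficient of the telescoping series -/
noncomputable def Acoef (a : ℕ → ℝ) (k : ℕ) : ℝ :=
  a (k + 1) * (2 * (k:ℝ) + 2) * (4 * (k:ℝ) ^ 2 + 5 / 4)

lemma summable_A (ha : ∀ k : ℕ, |a (k + 1)| ≤ 1 / (k.factorial : ℝ) ^ 2) (x : ℝ) :
    Summable (fun k => Acoef a k * x ^ (2 * k + 1)) := by
  set R : ℝ := |x| + 1 with hRdef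
  have hR : 1 ≤ R := by rw [hRdef]; linarith [abs_nonneg x]
  have hx : |x| ≤ R := by rw [hRdef]; linarith
  apply Summable.of_norm_bounded ((summ_aux 3 R (by linarith)).mul_left (R^2))
  intro k
  have hkf : (0:ℝ) < (k.factorial : ℝ) := by exact_mod_cast k.factorial_pos
  have h1 : |Acoef a k| ≤ (1 / (k.factorial : ℝ)^2) * (2 * (k:ℝ) + 2)^3 := by
    rw [Acoef, abs_mul, abs_mul]
    have e1 : |2 * (k:ℝ) + 2| = 2 * (k:ℝ) + 2 := abs_of_pos (by positivity)
    have e2 : |4 * (k:ℝ)^2 + 5/4| = 4 * (k:ℝ)^2 + 5/4 := abs_of_pos (by positivity)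
    rw [e1, e2]
    have h2 : (2 * (k:ℝ) + 2) * (4 * (k:ℝ)^2 + 5/4) ≤ (2 * (k:ℝ) + 2)^3 := by
      nlinarith [Nat.cast_nonneg (α := ℝ) k]
    calc |a (k+1)| * (2 * (k:ℝ) + 2) * (4 * (k:ℝ)^2 + 5/4)
        ≤ (1 / (k.factorial : ℝ)^2) * ((2 * (k:ℝ) + 2) * (4 * (k:ℝ)^2 + 5/4)) := by
          rw [mul_assoc]
          apply mul_le_mul_of_nonneg_right (ha k) (by positivity)
      _ ≤ (1 / (k.factorial : ℝ)^2) * (2 * (k:ℝ) + 2)^3 := by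
          apply mul_le_mul_of_nonneg_left h2 (by positivity)
  have h3 : |x| ^ (2*k+1) ≤ R ^ 2 * R ^ (2*k) := by
    calc |x| ^ (2*k+1) ≤ R ^ (2*k+1) := pow_le_pow_left₀ (abs_nonneg x) hx _
      _ ≤ R ^ (2*k+2) := pow_le_pow_right₀ hR (by omega)
      _ = R ^ 2 * R ^ (2*k) := by rw [show 2*k+2 = 2 + 2*k by ring, pow_add]
  rw [Real.norm_eq_abs, abs_mul, abs_pow]
  calc |Acoef a k| * |x| ^ (2*k+1)
      ≤ ((1 / (k.factorial : ℝ)^2) * (2 * (k:ℝ) + 2)^3) * (R^2 * R^(2*k)) := by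
        apply mul_le_mul h1 h3 (by positivity) (by positivity)
    _ = R ^ 2 * ((2 * (k:ℝ) + 2)^3 * R^(2*k) / (k.factorial : ℝ)^2) := by
        field_simp

lemma hAB
    (harec : ∀ k : ℕ, 1 ≤ k →
      2 * ((k : ℝ) + 1) * (4 * (k : ℝ) ^ 2 + 5 / 4) * a (k + 1) + (2 * (k : ℝ) - 1) * a k = 0)
    (k : ℕ) : Acoef a (k+1) = -((2 * (k:ℝ) + 1) * a (k + 1)) := by
  have h := harec (k + 1) (by omega)
  push_cast at h
  rw [Acoef]
  push_cast
  linarith [h]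

lemma hODE (ha1 : a 1 = 1)
    (harec : ∀ k : ℕ, 1 ≤ k →
      2 * ((k : ℝ) + 1) * (4 * (k : ℝ) ^ 2 + 5 / 4) * a (k + 1) + (2 * (k : ℝ) - 1) * a k = 0)
    (x : ℝ) :
    x^2 * W a 3 x - x * W a 2 x + (9/4) * W a 1 x + x^2 * W a 1 x - x * W a 0 x = (5/2) * x := by
  have ha := habs ha1 harec
  have hA := (summable_A ha x).hasSum
  set S : ℝ := ∑' k, Acoef a k * x ^ (2 * k + 1) with hSdef
  have hshift : HasSum (fun k => Acoef a (k+1) * x ^ (2 * (k+1) + 1))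
      (S - ∑ i ∈ Finset.range 1, Acoef a i * x ^ (2 * i + 1)) :=
    (hasSum_nat_add_iff' (f := fun k => Acoef a k * x ^ (2 * k + 1)) 1).mpr hA
  rw [Finset.range_one, Finset.sum_singleton] at hshift
  have hB : HasSum (fun (k : ℕ) => (2 * (k:ℝ) + 1) * a (k + 1) * x ^ (2 * k + 3))
      (Acoef a 0 * x ^ (2 * 0 + 1) - S) := by
    have hn := hshift.neg
    have : (fun k => -(Acoef a (k+1) * x ^ (2 * (k+1) + 1)))
        = (fun (k : ℕ) => (2 * (k:ℝ) + 1) * a (k + 1) * x ^ (2 * k + 3)) := by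
      funext k
      rw [hAB harec k, show 2 * (k+1) + 1 = 2*k+3 by ring]
      ring
    rw [this] at hn
    rw [show Acoef a 0 * x ^ (2 * 0 + 1) - S = -(S - Acoef a 0 * x ^ (2 * 0 + 1)) by ring]
    exact hn
  have hC := hA.add hB
  have hCval : S + (Acoef a 0 * x ^ (2 * 0 + 1) - S) = (5/2) * x := by
    rw [Acoef, ha1]
    push_cast
    ring
  rw [hCval] at hC
  have hD := ((((((hSum ha 3 x).mul_left (x^2)).sub ((hSum ha 2 x).mul_left x)).add
      ((hSum ha 1 x).mul_left (9/4))).add ((hSum ha 1 x).mul_left (x^2))).sub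
      ((hSum ha 0 x).mul_left x))
  have hterm : (fun k => x^2 * tm a 3 k x - x * tm a 2 k x + (9/4) * tm a 1 k x
      + x^2 * tm a 1 k x - x * tm a 0 k x)
      = (fun k => Acoef a k * x ^ (2 * k + 1) + (2 * (k:ℝ) + 1) * a (k + 1) * x ^ (2 * k + 3)) := by
    funext k
    match k with
    | 0 =>
      norm_num [tm, Acoef, Nat.descFactorial]
      ring
    | (k+1) =>
      simp only [tm, Acoef, Nat.descFactorial_succ, Nat.descFactorial_zero]
      rw [show 2*(k+1)+2-0 = 2*k+4 by omega, show 2*(k+1)+2-1 = 2*k+3 by omega,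
        show 2*(k+1)+2-2 = 2*k+2 by omega, show 2*(k+1)+2-3 = 2*k+1 by omega,
        show 2*(k+1)+1 = 2*k+3 by omega, show 2*(k+1)+3 = 2*k+5 by omega]
      push_cast [Nat.sub_zero]
      ring
  rw [hterm] at hD
  exact hD.unique hC

/- ============ the polynomial first-integral function and its derivatives ============ -/

noncomputable def FF (a : ℕ → ℝ) (x : ℝ) : ℝ :=
  (9/4 : ℝ) * W a 1 x * W a 1 x + (-2 : ℝ) * x ^ 1 * W a 0 x * W a 1 x + (-5 : ℝ) * x ^ 1 * W a 1 x + (-2 : ℝ) * x ^ 1 * W a 1 x * W a 2 x + (5 : ℝ) * x ^ 2 + (1 : ℝ) * x ^ 2 * W a 1 x * W a 1 x + (1 : ℝ) * x ^ 2 * W a 2 x * W a 2 x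

noncomputable def FF1 (a : ℕ → ℝ) (x : ℝ) : ℝ :=
  (-2 : ℝ) * W a 0 x * W a 1 x + (-5 : ℝ) * W a 1 x + (5/2 : ℝ) * W a 1 x * W a 2 x + (10 : ℝ) * x ^ 1 + (-2 : ℝ) * x ^ 1 * W a 0 x * W a 2 x + (-2 : ℝ) * x ^ 1 * W a 1 x * W a 3 x + (-5 : ℝ) * x ^ 1 * W a 2 x + (2 : ℝ) * x ^ 2 * W a 1 x * W a 2 x + (2 : ℝ) * x ^ 2 * W a 2 x * W a 3 x

noncomputable def FF2 (a : ℕ → ℝ) (x : ℝ) : ℝ :=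
  (10 : ℝ) + (-4 : ℝ) * W a 0 x * W a 2 x + (-2 : ℝ) * W a 1 x * W a 1 x + (1/2 : ℝ) * W a 1 x * W a 3 x + (-10 : ℝ) * W a 2 x + (5/2 : ℝ) * W a 2 x * W a 2 x + (-2 : ℝ) * x ^ 1 * W a 0 x * W a 3 x + (2 : ℝ) * x ^ 1 * W a 1 x * W a 2 x + (-2 : ℝ) * x ^ 1 * W a 1 x * W a 4 x + (2 : ℝ) * x ^ 1 * W a 2 x * W a 3 x + (-5 : ℝ) * x ^ 1 * W a 3 x + (2 : ℝ) * x ^ 2 * W a 1 x * W a 3 x + (2 : ℝ) * x ^ 2 * W a 2 x * W a 2 x + (2 : ℝ) * x ^ 2 * W a 2 x * W a 4 x + (2 : ℝ) * x ^ 2 * W a 3 x * W a 3 x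

noncomputable def FF3 (a : ℕ → ℝ) (x : ℝ) : ℝ :=
  (-6 : ℝ) * W a 0 x * W a 3 x + (-6 : ℝ) * W a 1 x * W a 2 x + (-3/2 : ℝ) * W a 1 x * W a 4 x + (15/2 : ℝ) * W a 2 x * W a 3 x + (-15 : ℝ) * W a 3 x + (-2 : ℝ) * x ^ 1 * W a 0 x * W a 4 x + (4 : ℝ) * x ^ 1 * W a 1 x * W a 3 x + (-2 : ℝ) * x ^ 1 * W a 1 x * W a 5 x + (6 : ℝ) * x ^ 1 * W a 2 x * W a 2 x + (4 : ℝ) * x ^ 1 * W a 2 x * W a 4 x + (6 : ℝ) * x ^ 1 * W a 3 x * W a 3 x + (-5 : ℝ) * x ^ 1 * W a 4 x + (2 : ℝ) * x ^ 2 * W a 1 x * W a 4 x + (6 : ℝ) * x ^ 2 * W a 2 x * W a 3 x + (2 : ℝ) * x ^ 2 * W a 2 x * W a 5 x + (6 : ℝ) * x ^ 2 * W a 3 x * W a 4 x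

lemma hFFd (hW : ∀ n x, HasDerivAt (W a n) (W a (n+1) x) x) (x : ℝ) :
    HasDerivAt (FF a) (FF1 a x) x := by
  have key := (((((((((hW 1 x).const_mul (9/4 : ℝ)).mul (hW 1 x)).add ((((hasDerivAt_pow 1 x).const_mul (-2 : ℝ)).mul (hW 0 x)).mul (hW 1 x))).add (((hasDerivAt_pow 1 x).const_mul (-5 : ℝ)).mul (hW 1 x))).add ((((hasDerivAt_pow 1 x).const_mul (-2 : ℝ)).mul (hW 1 x)).mul (hW 2 x))).add ((hasDerivAt_pow 2 x).const_mul (5 : ℝ))).add ((((hasDerivAt_pow 2 x).const_mul (1 : ℝ)).mul (hW 1 x)).mul (hW 1 x))).add ((((hasDerivAt_pow 2 x).const_mul (1 : ℝ)).mul (hW 2 x)).mul (hW 2 x)))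
  have : HasDerivAt (FF a) _ x := key
  exact this.congr_deriv (by unfold FF1; push_cast [Pi.mul_apply]; ring)

lemma hFF1d (hW : ∀ n x, HasDerivAt (W a n) (W a (n+1) x) x) (x : ℝ) :
    HasDerivAt (FF1 a) (FF2 a x) x := by
  have key := (((((((((((hW 0 x).const_mul (-2 : ℝ)).mul (hW 1 x)).add ((hW 1 x).const_mul (-5 : ℝ))).add (((hW 1 x).const_mul (5/2 : ℝ)).mul (hW 2 x))).add ((hasDerivAt_pow 1 x).const_mul (10 : ℝ))).add ((((hasDerivAt_pow 1 x).const_mul (-2 : ℝ)).mul (hW 0 x)).mul (hW 2 x))).add ((((hasDerivAt_pow 1 x).const_mul (-2 : ℝ)).mul (hW 1 x)).mul (hW 3 x))).add (((hasDerivAt_pow 1 x).const_mul (-5 : ℝ)).mul (hW 2 x))).add ((((hasDerivAt_pow 2 x).const_mul (2 : ℝ)).mul (hW 1 x)).mul (hW 2 x))).add ((((hasDerivAt_pow 2 x).const_mul (2 : ℝ)).mul (hW 2 x)).mul (hW 3 x)))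
  have : HasDerivAt (FF1 a) _ x := key
  exact this.congr_deriv (by unfold FF2; push_cast [Pi.mul_apply]; ring)

lemma hFF2d (hW : ∀ n x, HasDerivAt (W a n) (W a (n+1) x) x) (x : ℝ) :
    HasDerivAt (FF2 a) (FF3 a x) x := by
  have key := (((((((((((((((hasDerivAt_const x (10 : ℝ)).add (((hW 0 x).const_mul (-4 : ℝ)).mul (hW 2 x))).add (((hW 1 x).const_mul (-2 : ℝ)).mul (hW 1 x))).add (((hW 1 x).const_mul (1/2 : ℝ)).mul (hW 3 x))).add ((hW 2 x).const_mul (-10 : ℝ))).add (((hW 2 x).const_mul (5/2 : ℝ)).mul (hW 2 x))).add ((((hasDerivAt_pow 1 x).const_mul (-2 : ℝ)).mul (hW 0 x)).mul (hW 3 x))).add ((((hasDerivAt_pow 1 x).const_mul (2 : ℝ)).mul (hW 1 x)).mul (hW 2 x))).add ((((hasDerivAt_pow 1 x).const_mul (-2 : ℝ)).mul (hW 1 x)).mul (hW 4 x))).add ((((hasDerivAt_pow 1 x).const_mul (2 : ℝ)).mul (hW 2 x)).mul (hW 3 x))).add (((hasDerivAt_pow 1 x).const_mul (-5 : ℝ)).mul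 (hW 3 x))).add ((((hasDerivAt_pow 2 x).const_mul (2 : ℝ)).mul (hW 1 x)).mul (hW 3 x))).add ((((hasDerivAt_pow 2 x).const_mul (2 : ℝ)).mul (hW 2 x)).mul (hW 2 x))).add ((((hasDerivAt_pow 2 x).const_mul (2 : ℝ)).mul (hW 2 x)).mul (hW 4 x))).add ((((hasDerivAt_pow 2 x).const_mul (2 : ℝ)).mul (hW 3 x)).mul (hW 3 x)))
  have : HasDerivAt (FF2 a) _ x := key
  exact this.congr_deriv (by unfold FF3; push_cast [Pi.mul_apply]; ring)

end Stmt2Aux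

open Stmt2Aux

/-- For every `x ≠ 0`,
`(X₀''(x))² + (1 + 9/(4x²)) (X₀'(x))² − 2 ((X₀(x) + X₀''(x))/x) X₀'(x) = −5`;
that is, the first integral `G^{X₀}` of the defining equation of `X₀` is identically `−5`. -/
theorem stmt2 (a : ℕ → ℝ) (ha1 : a 1 = 1)
    (harec : ∀ k : ℕ, 1 ≤ k →
      2 * ((k : ℝ) + 1) * (4 * (k : ℝ) ^ 2 + 5 / 4) * a (k + 1) + (2 * (k : ℝ) - 1) * a k = 0)
    (X0 : ℝ → ℝ)
    (hX0 : ∀ x : ℝ, HasSum (fun k : ℕ => a (k + 1) * x ^ (2 * (k + 1))) (X0 x - 5 / 2)) :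
    ∀ x : ℝ, x ≠ 0 →
      (iteratedDeriv 2 X0 x) ^ 2 + (1 + 9 / (4 * x ^ 2)) * (deriv X0 x) ^ 2
        - 2 * ((X0 x + iteratedDeriv 2 X0 x) / x) * deriv X0 x = -5 := by
  have ha := habs ha1 harec
  have hWd : ∀ n x, HasDerivAt (W a n) (W a (n+1) x) x := hW ha
  -- identify X0 with 5/2 + W 0
  have hX0W : ∀ x : ℝ, X0 x = 5/2 + W a 0 x := by
    intro x
    have h1 := hX0 x
    have h2 : HasSum (fun k : ℕ => a (k + 1) * x ^ (2 * (k + 1))) (W a 0 x) := by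
      have := hSum ha 0 x
      convert this using 1
      funext k
      rw [tm, Nat.descFactorial_zero, Nat.sub_zero, show 2*(k+1) = 2*k+2 by ring]
      push_cast
      ring
    have := h1.unique h2
    linarith
  have hX0eq : X0 = fun x => 5/2 + W a 0 x := funext hX0W
  have hX0d : ∀ x, HasDerivAt X0 (W a 1 x) x := by
    intro x
    rw [hX0eq]
    exact (hWd 0 x).const_add (5/2)
  have hderiv1 : deriv X0 = W a 1 := funext fun x => (hX0d x).deriv
  have hderiv2 : ∀ x, iteratedDeriv 2 X0 x = W a 2 x := by
    intro x
    rw [show (2:ℕ) = 1 + 1 from rfl, iteratedDeriv_succ, iteratedDeriv_one, hderiv1]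
    exact (hWd 1 x).deriv
  -- the ODE and the first-integral identities
  have hODEx := hODE ha1 harec
  have h1 : ∀ x, x * FF1 a x = 2 * FF a x := by
    intro x
    have h := hODEx x
    unfold FF FF1
    linear_combination (2*x*W a 2 x - 2*W a 1 x) * h
  have h2 : ∀ x, x * FF2 a x = FF1 a x := by
    intro x
    have hpsi0 : (fun y => y * FF1 a y - 2 * FF a y) = (fun _ => (0:ℝ)) :=
      funext fun y => sub_eq_zero.mpr (h1 y)
    have Hd : HasDerivAt (fun y => y * FF1 a y - 2 * FF a y)
        (1 * FF1 a x + x * FF2 a x - 2 * FF1 a x) x :=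
      ((hasDerivAt_id x).mul (hFF1d hWd x)).sub ((hFFd hWd x).const_mul 2)
    have Hz : HasDerivAt (fun y => y * FF1 a y - 2 * FF a y) 0 x := by
      rw [hpsi0]; exact hasDerivAt_const x 0
    have := Hd.unique Hz
    linarith
  have h3 : ∀ x, x * FF3 a x = 0 := by
    intro x
    have hxi0 : (fun y => y * FF2 a y - FF1 a y) = (fun _ => (0:ℝ)) :=
      funext fun y => sub_eq_zero.mpr (h2 y)
    have Hd : HasDerivAt (fun y => y * FF2 a y - FF1 a y)
        (1 * FF2 a x + x * FF3 a x - FF2 a x) x :=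
      ((hasDerivAt_id x).mul (hFF2d hWd x)).sub (hFF1d hWd x)
    have Hz : HasDerivAt (fun y => y * FF2 a y - FF1 a y) 0 x := by
      rw [hxi0]; exact hasDerivAt_const x 0
    have := Hd.unique Hz
    linarith
  -- FF3 vanishes everywhere
  have hFF3z : ∀ x, FF3 a x = 0 := by
    intro x
    rcases eq_or_ne x 0 with rfl | hx
    · unfold FF3
      rw [hW10, hW30]
      norm_num
    · have := h3 x
      rcases mul_eq_zero.mp this with h | h
      · exact absurd h hx
      · exact h
  -- FF2 is constant, equal to its value at 0 which is 0
  have hFF2z : ∀ x, FF2 a x = 0 := by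
    have hd : Differentiable ℝ (FF2 a) := fun x => (hFF2d hWd x).differentiableAt
    have hdz : ∀ x, deriv (FF2 a) x = 0 := fun x => by
      rw [(hFF2d hWd x).deriv, hFF3z x]
    intro x
    have hconst := is_const_of_deriv_eq_zero hd hdz x 0
    have hv : FF2 a 0 = 0 := by
      unfold FF2
      rw [hW00, hW10, hW20 ha1]
      norm_num
    rw [hconst, hv]
  have hFF1z : ∀ x, FF1 a x = 0 := by
    have hd : Differentiable ℝ (FF1 a) := fun x => (hFF1d hWd x).differentiableAt
    have hdz : ∀ x, deriv (FF1 a) x = 0 := fun x => by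
      rw [(hFF1d hWd x).deriv, hFF2z x]
    intro x
    have hconst := is_const_of_deriv_eq_zero hd hdz x 0
    have hv : FF1 a 0 = 0 := by
      unfold FF1
      rw [hW10]
      norm_num
    rw [hconst, hv]
  have hFFz : ∀ x, FF a x = 0 := by
    have hd : Differentiable ℝ (FF a) := fun x => (hFFd hWd x).differentiableAt
    have hdz : ∀ x, deriv (FF a) x = 0 := fun x => by
      rw [(hFFd hWd x).deriv, hFF1z x]
    intro x
    have hconst := is_const_of_deriv_eq_zero hd hdz x 0
    have hv : FF a 0 = 0 := by
      unfold FF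
      rw [hW10]
      norm_num
    rw [hconst, hv]
  -- conclude
  intro x hx
  have hF := hFFz x
  unfold FF at hF
  rw [hderiv2 x, hderiv1, hX0W x]
  have hx2 : x^2 ≠ 0 := pow_ne_zero 2 hx
  field_simp
  linear_combination 4 * hF
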